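/- For every integer n ≥ 0, every integer r ≥ 1 and every real number x, C_n^{(r)}(x) = Σ_{k=0}^{n} Σ_{l=0}^{k} E_{l,λ}^{(r)}(x)·S_{J,λ}^{(1)}(k,l)·S_{2,λ}(n,k). -/

import Mathlib

open Finset PowerSeries

/-- degenerate falling factorial `(x)_{n,λ}`; `dff 1 x n` is the ordinary falling factorial. -/
noncomputable def dff (lam x : ℝ) (n : ℕ) : ℝ := ∏ i ∈ Finset.range n, (x - (i : ℝ) * lam)

/-- `(1)_{n,1/λ} = ∏_{i<n} (1 - i/λ)`. -/
noncomputable def oneFall (lam : ℝ) (n : ℕ) : ℝ := ∏ i ∈ Finset.range n, (1 - (i : ℝ) / lam)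

/-- degenerate exponential `e_λ^x(t)` as a formal power series. -/
noncomputable def degExp (lam x : ℝ) : PowerSeries ℝ :=
  PowerSeries.mk fun n => dff lam x n / n.factorial

/-- `(1+t)^y = Σ_{n≥0} (y)_n t^n/n!`. -/
noncomputable def onePlus (y : ℝ) : PowerSeries ℝ :=
  PowerSeries.mk fun n => dff 1 y n / n.factorial

/-- `(1-t)^y = Σ_{n≥0} (y)_n (-1)^n t^n/n!`. -/
noncomputable def oneMinus (y : ℝ) : PowerSeries ℝ :=
  PowerSeries.mk fun n => dff 1 y n * (-1) ^ n / n.factorial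

/-- `log_λ(1+t) = Σ_{n≥1} λ^{n-1} (1)_{n,1/λ} t^n/n!`. -/
noncomputable def degLog (lam : ℝ) : PowerSeries ℝ :=
  PowerSeries.mk fun n => if n = 0 then 0 else lam ^ (n - 1) * oneFall lam n / n.factorial

/-- `log_λ(1-t) = Σ_{n≥1} λ^{n-1} (1)_{n,1/λ} (-1)^n t^n/n!`. -/
noncomputable def degLogNeg (lam : ℝ) : PowerSeries ℝ :=
  PowerSeries.mk fun n =>
    if n = 0 then 0 else lam ^ (n - 1) * oneFall lam n * (-1) ^ n / n.factorial

/-- composition `f(g(t))` of formal power series (the usual composition when the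
constant term of `g` is zero). -/
noncomputable def pcomp (f g : PowerSeries ℝ) : PowerSeries ℝ :=
  PowerSeries.mk fun n =>
    ∑ k ∈ Finset.range (n + 1), (PowerSeries.coeff k f) * (PowerSeries.coeff n (g ^ k))

lemma dff_zero (lam x : ℝ) : dff lam x 0 = 1 := by simp [dff]

lemma dff_succ (lam x : ℝ) (n : ℕ) : dff lam x (n+1) = dff lam x n * (x - n * lam) := by
  simp [dff, Finset.prod_range_succ]

lemma dff_rescale (lam : ℝ) (hlam : lam ≠ 0) (x : ℝ) (n : ℕ) :
    dff lam x n = lam ^ n * dff 1 (x / lam) n := by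
  induction n with
  | zero => simp [dff_zero]
  | succ n ih =>
    rw [dff_succ, dff_succ, ih, pow_succ]
    field_simp

lemma dff_vandermonde (a b : ℝ) (n : ℕ) :
    dff 1 (a + b) n = ∑ k ∈ Finset.range (n+1), (n.choose k : ℝ) * dff 1 a k * dff 1 b (n-k) := by
  induction n with
  | zero => simp [dff_zero]
  | succ n ih =>
    rw [dff_succ, ih, Finset.sum_mul]
    have key : ∀ k ∈ Finset.range (n+1),
        (n.choose k : ℝ) * dff 1 a k * dff 1 b (n-k) * (a + b - n * 1) =
        ((n.choose k : ℝ) * (dff 1 a (k+1) * dff 1 b (n-k)))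
          + ((n.choose k : ℝ) * (dff 1 a k * dff 1 b (n-k+1))) := by
      intro k hk
      rw [Finset.mem_range] at hk
      have hk' : k ≤ n := Nat.lt_succ_iff.mp hk
      have h1 : dff 1 a (k+1) = dff 1 a k * (a - k) := by rw [dff_succ]; ring_nf
      have h2 : dff 1 b (n-k+1) = dff 1 b (n-k) * (b - (n - k : ℕ)) := by rw [dff_succ]; ring_nf
      have h3 : ((n - k : ℕ) : ℝ) = (n : ℝ) - k := by
        rw [Nat.cast_sub hk']
      rw [h1, h2, h3]
      ring
    rw [Finset.sum_congr rfl key, Finset.sum_add_distrib]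
    -- first sum: shift index
    have shift : ∑ k ∈ Finset.range (n+1), (n.choose k : ℝ) * (dff 1 a (k+1) * dff 1 b (n-k))
        = ∑ k ∈ Finset.range (n+2), (if k = 0 then 0 else (n.choose (k-1) : ℝ)) * (dff 1 a k * dff 1 b (n+1-k)) := by
      rw [Finset.sum_range_succ' (fun k => (if k = 0 then 0 else (n.choose (k-1) : ℝ)) * (dff 1 a k * dff 1 b (n+1-k)))]
      simp only [Nat.add_sub_cancel, if_neg (Nat.succ_ne_zero _), Nat.succ_sub_succ]
      simp
    have ext2 : ∑ k ∈ Finset.range (n+1), (n.choose k : ℝ) * (dff 1 a k * dff 1 b (n-k+1))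
        = ∑ k ∈ Finset.range (n+2), (n.choose k : ℝ) * (dff 1 a k * dff 1 b (n+1-k)) := by
      rw [Finset.sum_range_succ (fun k => (n.choose k : ℝ) * (dff 1 a k * dff 1 b (n+1-k)))]
      rw [Nat.choose_succ_self, Nat.cast_zero]
      rw [show ((0:ℝ) * (dff 1 a (n+1) * dff 1 b (n+1-(n+1))) = 0) by ring]
      rw [add_zero]
      apply Finset.sum_congr rfl
      intro k hk
      rw [Finset.mem_range] at hk
      have : n - k + 1 = n + 1 - k := by omega
      rw [this]
    rw [shift, ext2, ← Finset.sum_add_distrib]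
    apply Finset.sum_congr rfl
    intro k hk
    rcases Nat.eq_zero_or_pos k with h0 | hpos
    · subst h0; simp
    · rw [if_neg (Nat.pos_iff_ne_zero.mp hpos)]
      have : (n+1).choose k = n.choose (k-1) + n.choose k := by
        rcases Nat.exists_eq_add_of_lt hpos with ⟨j, hj⟩
        have : k = j + 1 := by omega
        subst this
        simp [Nat.choose_succ_succ, Nat.add_comm]
      rw [this]
      push_cast
      ring

lemma coeff_onePlus (a : ℝ) (n : ℕ) : coeff n (onePlus a) = dff 1 a n / n.factorial := by
  simp [onePlus]

lemma constantCoeff_onePlus (a : ℝ) : constantCoeff (onePlus a) = 1 := by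
  rw [← coeff_zero_eq_constantCoeff_apply, coeff_onePlus, dff_zero]; simp

lemma onePlus_zero : onePlus 0 = 1 := by
  ext n
  rw [coeff_onePlus]
  cases n with
  | zero => simp [dff_zero]
  | succ n =>
    have : dff 1 0 (n+1) = 0 := by
      unfold dff
      apply Finset.prod_eq_zero (i := 0) (by simp)
      simp
    simp [this, PowerSeries.coeff_one]

lemma onePlus_mul (a b : ℝ) : onePlus a * onePlus b = onePlus (a + b) := by
  ext n
  rw [coeff_onePlus, PowerSeries.coeff_mul, Finset.Nat.sum_antidiagonal_eq_sum_range_succ_mk,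
    dff_vandermonde, Finset.sum_div]
  apply Finset.sum_congr rfl
  intro k hk
  rw [Finset.mem_range, Nat.lt_succ_iff] at hk
  rw [coeff_onePlus, coeff_onePlus]
  rw [div_mul_div_comm, eq_div_iff, div_mul_eq_mul_div, div_eq_iff]
  · push_cast [← Nat.choose_mul_factorial_mul_factorial hk]
    ring
  · positivity
  · positivity

lemma onePlus_pow (a : ℝ) (m : ℕ) : onePlus a ^ m = onePlus (a * m) := by
  induction m with
  | zero => simp [onePlus_zero]
  | succ m ih =>
    rw [pow_succ, ih, onePlus_mul]
    norm_num
    ring_nf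

lemma onePlus_one_eq : onePlus 1 = 1 + X := by
  ext n
  rw [coeff_onePlus]
  match n with
  | 0 => simp [dff_zero]
  | 1 => simp [dff, PowerSeries.coeff_one]
  | (m+2) =>
    have : dff 1 1 (m+2) = 0 := by
      unfold dff
      apply Finset.prod_eq_zero (i := 1) (by simp)
      norm_num
    rw [this]
    simp [PowerSeries.coeff_one, PowerSeries.coeff_X]

lemma onePlus_nat (m : ℕ) : onePlus (m : ℝ) = (1 + X) ^ m := by
  induction m with
  | zero => push_cast; rw [onePlus_zero]; simp
  | succ m ih =>
    push_cast
    rw [← onePlus_mul, ih, onePlus_one_eq, pow_succ]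

lemma coeff_pow_eq_zero {g : PowerSeries ℝ} (hg : constantCoeff g = 0) {n k : ℕ}
    (h : n < k) : coeff n (g ^ k) = 0 := by
  have hdvd : (X : PowerSeries ℝ) ^ k ∣ g ^ k := pow_dvd_pow_of_dvd (X_dvd_iff.mpr hg) k
  exact (X_pow_dvd_iff.mp hdvd) n h

lemma coeff_pcomp (f g : PowerSeries ℝ) (n : ℕ) :
    coeff n (pcomp f g) = ∑ k ∈ Finset.range (n + 1), coeff k f * coeff n (g ^ k) := by
  simp [pcomp]

lemma coeff_pcomp_big {g : PowerSeries ℝ} (hg : constantCoeff g = 0) (f : PowerSeries ℝ)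
    {n N : ℕ} (hN : n < N) :
    coeff n (pcomp f g) = ∑ k ∈ Finset.range N, coeff k f * coeff n (g ^ k) := by
  rw [coeff_pcomp]
  apply Finset.sum_subset
  · exact Finset.range_subset_range.mpr hN
  · intro k _ hk
    rw [Finset.mem_range, not_lt] at hk
    rw [coeff_pow_eq_zero hg (by omega), mul_zero]

lemma constantCoeff_pcomp (f g : PowerSeries ℝ) :
    constantCoeff (pcomp f g) = constantCoeff f := by
  rw [← coeff_zero_eq_constantCoeff_apply, coeff_pcomp]
  simp

lemma pcomp_add (f₁ f₂ g : PowerSeries ℝ) :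
    pcomp (f₁ + f₂) g = pcomp f₁ g + pcomp f₂ g := by
  ext n
  simp [coeff_pcomp, add_mul, Finset.sum_add_distrib]

lemma pcomp_smul (c : ℝ) (f g : PowerSeries ℝ) : pcomp (c • f) g = c • pcomp f g := by
  ext n
  simp [coeff_pcomp, Finset.mul_sum, mul_assoc]

lemma pcomp_C (c : ℝ) (g : PowerSeries ℝ) : pcomp (C c) g = C c := by
  ext n
  rw [coeff_pcomp]
  rw [Finset.sum_eq_single 0]
  · simp [PowerSeries.coeff_C]
  · intro k _ hk
    simp [PowerSeries.coeff_C, hk]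
  · simp

lemma pcomp_one (g : PowerSeries ℝ) : pcomp 1 g = 1 := by
  have := pcomp_C 1 g
  simpa using this

lemma pcomp_sub (f₁ f₂ g : PowerSeries ℝ) :
    pcomp (f₁ - f₂) g = pcomp f₁ g - pcomp f₂ g := by
  have h := pcomp_add (f₁ - f₂) f₂ g
  rw [sub_add_cancel] at h
  rw [eq_sub_iff_add_eq, ← h]

lemma pcomp_X {g : PowerSeries ℝ} (hg : constantCoeff g = 0) : pcomp X g = g := by
  ext n
  rw [coeff_pcomp, Finset.sum_eq_single 1]
  · simp
  · intro k _ hk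
    simp [PowerSeries.coeff_X, hk]
  · intro h
    rw [Finset.mem_range, not_lt] at h
    have : n = 0 := by omega
    subst this
    simp [hg]

lemma pcomp_right_X (f : PowerSeries ℝ) : pcomp f X = f := by
  ext n
  rw [coeff_pcomp, Finset.sum_eq_single n]
  · simp [PowerSeries.coeff_X_pow]
  · intro k _ hk
    simp [PowerSeries.coeff_X_pow, Ne.symm hk]
  · intro h
    simp at h

lemma pcomp_mul {g : PowerSeries ℝ} (hg : constantCoeff g = 0) (f₁ f₂ : PowerSeries ℝ) :
    pcomp (f₁ * f₂) g = pcomp f₁ g * pcomp f₂ g := by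
  ext n
  have hGz : ∀ k, n + 1 ≤ k → coeff n (g ^ k) = 0 := fun k hk => coeff_pow_eq_zero hg (by omega)
  have LHS : coeff n (pcomp (f₁ * f₂) g)
      = ∑ k ∈ Finset.range (n+1), ∑ l ∈ Finset.range (n+1),
        coeff k f₁ * coeff l f₂ * coeff n (g ^ (k + l)) := by
    rw [coeff_pcomp]
    have h1 : ∀ m ∈ Finset.range (n+1), coeff m (f₁ * f₂) * coeff n (g ^ m)
        = ∑ k ∈ Finset.range (n+1),
            (if k ≤ m then coeff k f₁ * coeff (m - k) f₂ * coeff n (g ^ m) else 0) := by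
      intro m hm
      rw [Finset.mem_range] at hm
      rw [PowerSeries.coeff_mul, Finset.Nat.sum_antidiagonal_eq_sum_range_succ_mk, Finset.sum_mul]
      rw [Finset.sum_ite, Finset.sum_const_zero, add_zero]
      have : Finset.filter (fun k => k ≤ m) (Finset.range (n+1)) = Finset.range (m + 1) := by
        ext k; simp only [Finset.mem_filter, Finset.mem_range]; omega
      rw [this]
    rw [Finset.sum_congr rfl h1, Finset.sum_comm]
    apply Finset.sum_congr rfl
    intro k hk
    rw [Finset.mem_range] at hk
    have filt : Finset.filter (fun m => k ≤ m) (Finset.range (n+1)) = Finset.Ico k (n+1) := by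
      ext m; simp only [Finset.mem_filter, Finset.mem_range, Finset.mem_Ico]; omega
    rw [Finset.sum_ite, Finset.sum_const_zero, add_zero, filt,
      Finset.sum_Ico_eq_sum_range]
    have h2 : ∀ i ∈ Finset.range (n + 1 - k),
        coeff k f₁ * coeff (k + i - k) f₂ * coeff n (g ^ (k + i))
        = coeff k f₁ * coeff i f₂ * coeff n (g ^ (k + i)) := by
      intro i _
      rw [Nat.add_sub_cancel_left]
    rw [Finset.sum_congr rfl h2]
    apply Finset.sum_subset
    · exact Finset.range_subset_range.mpr (by omega)
    · intro i _ hi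
      rw [Finset.mem_range, not_lt] at hi
      rw [hGz (k + i) (by omega), mul_zero]
  have RHS : coeff n (pcomp f₁ g * pcomp f₂ g)
      = ∑ k ∈ Finset.range (n+1), ∑ l ∈ Finset.range (n+1),
        coeff k f₁ * coeff l f₂ * coeff n (g ^ (k + l)) := by
    rw [PowerSeries.coeff_mul]
    have h1 : ∀ p ∈ Finset.HasAntidiagonal.antidiagonal n,
        coeff p.1 (pcomp f₁ g) * coeff p.2 (pcomp f₂ g)
        = ∑ k ∈ Finset.range (n+1), ∑ l ∈ Finset.range (n+1),
            coeff k f₁ * coeff l f₂ * (coeff p.1 (g ^ k) * coeff p.2 (g ^ l)) := by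
      intro p hp
      rw [Finset.HasAntidiagonal.mem_antidiagonal] at hp
      rw [coeff_pcomp_big hg f₁ (show p.1 < n+1 by omega),
          coeff_pcomp_big hg f₂ (show p.2 < n+1 by omega), Finset.sum_mul_sum]
      apply Finset.sum_congr rfl; intro k _
      apply Finset.sum_congr rfl; intro l _
      ring
    rw [Finset.sum_congr rfl h1]
    rw [Finset.sum_comm]
    apply Finset.sum_congr rfl
    intro k _
    rw [Finset.sum_comm]
    apply Finset.sum_congr rfl
    intro l _
    rw [← Finset.mul_sum, pow_add, PowerSeries.coeff_mul]
  rw [LHS, RHS]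

lemma pcomp_pow {g : PowerSeries ℝ} (hg : constantCoeff g = 0) (f : PowerSeries ℝ) (m : ℕ) :
    pcomp (f ^ m) g = pcomp f g ^ m := by
  induction m with
  | zero => simpa using pcomp_one g
  | succ m ih => rw [pow_succ, pcomp_mul hg, ih, pow_succ]

lemma pcomp_assoc {g h : PowerSeries ℝ} (hgc : constantCoeff g = 0)
    (hhc : constantCoeff h = 0) (f : PowerSeries ℝ) :
    pcomp (pcomp f g) h = pcomp f (pcomp g h) := by
  have hgh : constantCoeff (pcomp g h) = 0 := by rw [constantCoeff_pcomp, hgc]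
  ext n
  set N := n + 1 with hN
  rw [coeff_pcomp, coeff_pcomp]
  have h1 : ∀ k ∈ Finset.range N, coeff k f * coeff n (pcomp g h ^ k)
      = ∑ j ∈ Finset.range N, coeff k f * (coeff j (g ^ k) * coeff n (h ^ j)) := by
    intro k _
    rw [← pcomp_pow hhc, coeff_pcomp_big hhc _ (show n < N by omega), Finset.mul_sum]
  rw [Finset.sum_congr rfl h1, Finset.sum_comm]
  apply Finset.sum_congr rfl
  intro j hj
  rw [Finset.mem_range] at hj
  rw [coeff_pcomp_big hgc f (show j < N by omega), Finset.sum_mul]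
  apply Finset.sum_congr rfl
  intro k _
  ring

lemma descPoch_eval (k : ℕ) (x : ℝ) : (descPochhammer ℝ k).eval x = dff 1 x k := by
  induction k with
  | zero => simp [dff_zero]
  | succ k ih => rw [descPochhammer_succ_eval, ih, dff_succ, mul_one]

lemma polyext {P Q : Polynomial ℝ} (h : ∀ m : ℕ, P.eval (m : ℝ) = Q.eval (m : ℝ)) : P = Q := by
  have hroot : Set.Infinite {x : ℝ | (P - Q).IsRoot x} := by
    apply Set.Infinite.mono (s := Set.range ((↑) : ℕ → ℝ))
    · rintro _ ⟨m, rfl⟩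
      simp [Polynomial.IsRoot, h m]
    · exact Set.infinite_range_of_injective Nat.cast_injective
  have := Polynomial.eq_zero_of_infinite_isRoot (P - Q) hroot
  exact sub_eq_zero.mp this

lemma dff_indep : ∀ (n : ℕ) (c : ℕ → ℝ),
    (∀ x : ℝ, ∑ k ∈ Finset.range (n+1), c k * dff 1 x k = 0) → ∀ j ≤ n, c j = 0 := by
  intro n
  induction n with
  | zero =>
    intro c h j hj
    interval_cases j
    have := h 0
    simpa [dff_zero] using this
  | succ n ih =>
    intro c h j hj
    have hP : (∑ k ∈ Finset.range (n+2), Polynomial.C (c k) * descPochhammer ℝ k) = 0 := by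
      apply polyext
      intro m
      rw [Polynomial.eval_finset_sum]
      simp only [Polynomial.eval_mul, Polynomial.eval_C, descPoch_eval, Polynomial.eval_zero]
      exact h m
    have htop : c (n+1) = 0 := by
      have hc := congrArg (fun p => Polynomial.coeff p (n+1)) hP
      simp only [Polynomial.finset_sum_coeff, Polynomial.coeff_zero] at hc
      rw [Finset.sum_eq_single (n+1)] at hc
      · rwa [Polynomial.coeff_C_mul,
          show (descPochhammer ℝ (n+1)).coeff (n+1) = 1 from by
            simpa [descPochhammer_natDegree] using
              (monic_descPochhammer ℝ (n+1)).coeff_natDegree, mul_one] at hc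
      · intro k hk hkne
        rw [Finset.mem_range] at hk
        rw [Polynomial.coeff_C_mul, Polynomial.coeff_eq_zero_of_natDegree_lt, mul_zero]
        rw [descPochhammer_natDegree]
        omega
      · intro hk
        simp at hk
    rcases Nat.lt_succ_iff_lt_or_eq.mp (Nat.lt_succ_of_le hj) with hj' | hj'
    · apply ih c _ j (by omega)
      intro x
      have := h x
      rw [Finset.sum_range_succ, htop, zero_mul, add_zero] at this
      exact this
    · rw [hj', htop]

lemma pcomp_onePlus_key (a b : ℝ) :
    pcomp (onePlus b) (onePlus a - 1) = onePlus (a * b) := by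
  have hg : constantCoeff (onePlus a - 1) = 0 := by
    simp [constantCoeff_onePlus]
  -- natural number case
  have hnat : ∀ m : ℕ, pcomp (onePlus (m : ℝ)) (onePlus a - 1) = onePlus (a * m) := by
    intro m
    rw [onePlus_nat, pcomp_pow hg, pcomp_add, pcomp_one, pcomp_X hg,
      add_sub_cancel, onePlus_pow]
  ext n
  set g := onePlus a - 1 with hgdef
  set P : Polynomial ℝ := ∑ k ∈ Finset.range (n+1),
    Polynomial.C (coeff n (g ^ k) / k.factorial) * descPochhammer ℝ k with hPdef
  set Q : Polynomial ℝ := Polynomial.C ((n.factorial : ℝ))⁻¹ *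
    ∏ i ∈ Finset.range n, (Polynomial.C a * Polynomial.X - Polynomial.C (i : ℝ)) with hQdef
  have hPeval : ∀ y : ℝ, P.eval y = coeff n (pcomp (onePlus y) g) := by
    intro y
    rw [coeff_pcomp, hPdef, Polynomial.eval_finset_sum]
    apply Finset.sum_congr rfl
    intro k _
    rw [Polynomial.eval_mul, Polynomial.eval_C, descPoch_eval, coeff_onePlus]
    field_simp
  have hQeval : ∀ y : ℝ, Q.eval y = coeff n (onePlus (a * y)) := by
    intro y
    rw [coeff_onePlus, hQdef, Polynomial.eval_mul, Polynomial.eval_C, Polynomial.eval_prod]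
    simp only [Polynomial.eval_sub, Polynomial.eval_mul, Polynomial.eval_C, Polynomial.eval_X]
    rw [div_eq_inv_mul]
    congr 1
    unfold dff
    apply Finset.prod_congr rfl
    intro i _
    ring
  have hPQ : P = Q := by
    apply polyext
    intro m
    rw [hPeval, hQeval, hnat m]
  have := congrArg (fun p => Polynomial.eval b p) hPQ
  rw [hPeval b, hQeval b] at this
  exact this

lemma coeff_smulX (c : ℝ) (f : PowerSeries ℝ) (n : ℕ) :
    coeff n (pcomp f (c • X)) = c ^ n * coeff n f := by
  rw [coeff_pcomp]
  rw [Finset.sum_eq_single n]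
  · rw [smul_pow, LinearMap.map_smul_of_tower, PowerSeries.coeff_X_pow, if_pos rfl]
    simp [mul_comm]
  · intro k _ hk
    rw [smul_pow, LinearMap.map_smul_of_tower, PowerSeries.coeff_X_pow, if_neg (Ne.symm hk)]
    simp
  · intro h
    simp at h

lemma degExp_eq (lam : ℝ) (hlam : lam ≠ 0) (x : ℝ) : degExp lam x = pcomp (onePlus (x / lam)) (lam • X) := by
  ext n
  rw [coeff_smulX, coeff_onePlus]
  simp only [degExp, PowerSeries.coeff_mk]
  rw [dff_rescale lam hlam x n]
  ring

lemma constantCoeff_smulX (c : ℝ) : constantCoeff (c • (X : PowerSeries ℝ)) = 0 := by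
  simp

lemma constantCoeff_onePlus_sub_one (a : ℝ) : constantCoeff (onePlus a - 1) = 0 := by
  simp [constantCoeff_onePlus]

lemma degLog_eq (lam : ℝ) (hlam : lam ≠ 0) : degLog lam = lam⁻¹ • (onePlus lam - 1) := by
  ext n
  simp only [degLog, PowerSeries.coeff_mk, LinearMap.map_smul_of_tower, map_sub,
    coeff_onePlus, smul_eq_mul]
  cases n with
  | zero => simp [dff_zero]
  | succ n =>
    rw [if_neg (Nat.succ_ne_zero n), PowerSeries.coeff_one, if_neg (Nat.succ_ne_zero n)]
    have h1 : dff 1 lam (n+1) = lam ^ (n+1) * oneFall lam (n+1) := by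
      unfold dff oneFall
      rw [← Finset.card_range (n+1), ← Finset.prod_const, Finset.card_range,
        ← Finset.prod_mul_distrib]
      apply Finset.prod_congr rfl
      intro i _
      field_simp
    rw [Nat.add_sub_cancel, h1]
    field_simp
    ring

lemma constantCoeff_degLog (lam : ℝ) : constantCoeff (degLog lam) = 0 := by
  rw [← coeff_zero_eq_constantCoeff_apply]
  simp [degLog]

lemma constantCoeff_eps (lam : ℝ) : constantCoeff (degExp lam 1 - 1) = 0 := by
  rw [map_sub, map_one, ← coeff_zero_eq_constantCoeff_apply]
  simp [degExp, dff_zero]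

lemma eps_eq (lam : ℝ) (hlam : lam ≠ 0) : degExp lam 1 - 1 = pcomp (onePlus lam⁻¹ - 1) (lam • X) := by
  rw [pcomp_sub, pcomp_one, degExp_eq lam hlam 1, one_div]

lemma pcomp_onePlus_eps (lam : ℝ) (hlam : lam ≠ 0) (x : ℝ) :
    pcomp (onePlus x) (degExp lam 1 - 1) = degExp lam x := by
  rw [eps_eq lam hlam, ← pcomp_assoc (constantCoeff_onePlus_sub_one lam⁻¹)
      (constantCoeff_smulX lam) (onePlus x), pcomp_onePlus_key, degExp_eq lam hlam,
    div_eq_inv_mul]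

lemma pcomp_degExp_degLog (lam : ℝ) (hlam : lam ≠ 0) (x : ℝ) :
    pcomp (degExp lam x) (degLog lam) = onePlus x := by
  rw [degExp_eq lam hlam, pcomp_assoc (constantCoeff_smulX lam) (constantCoeff_degLog lam),
    pcomp_smul, pcomp_X (constantCoeff_degLog lam), degLog_eq lam hlam, smul_smul,
    mul_inv_cancel₀ hlam, one_smul, pcomp_onePlus_key]
  congr 1
  field_simp

lemma degExp_lam_lam (lam : ℝ) : degExp lam lam = 1 + lam • X := by
  ext n
  simp only [degExp, PowerSeries.coeff_mk, map_add, PowerSeries.coeff_one,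
    LinearMap.map_smul_of_tower, PowerSeries.coeff_X, smul_eq_mul]
  match n with
  | 0 => simp [dff_zero]
  | 1 => simp [dff_succ, dff_zero]
  | (m+2) =>
    have : dff lam lam (m+2) = 0 := by
      unfold dff
      apply Finset.prod_eq_zero (i := 1) (by simp)
      simp
    rw [this]
    simp

lemma pcomp_degLog_eps (lam : ℝ) (hlam : lam ≠ 0) : pcomp (degLog lam) (degExp lam 1 - 1) = X := by
  rw [degLog_eq lam hlam, pcomp_smul, pcomp_sub, pcomp_one, pcomp_onePlus_eps lam hlam,
    degExp_lam_lam, add_sub_cancel_left, smul_smul, inv_mul_cancel₀ hlam, one_smul]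


lemma S2_formula (lam : ℝ) (hlam : lam ≠ 0) (S2 : ℕ → ℕ → ℝ)
    (hS2 : ∀ (x : ℝ) (n : ℕ), dff lam x n = ∑ l ∈ Finset.range (n + 1), S2 n l * dff 1 x l)
    (n k : ℕ) (hk : k ≤ n) :
    S2 n k / n.factorial = coeff n ((degExp lam 1 - 1) ^ k) / k.factorial := by
  have key : ∀ x : ℝ, ∑ j ∈ Finset.range (n+1),
      (S2 n j / n.factorial - coeff n ((degExp lam 1 - 1) ^ j) / j.factorial) * dff 1 x j
      = 0 := by
    intro x
    have h1 : ∑ j ∈ Finset.range (n+1), (S2 n j / n.factorial) * dff 1 x j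
        = dff lam x n / n.factorial := by
      rw [hS2 x n, Finset.sum_div]
      apply Finset.sum_congr rfl
      intro j _
      ring
    have h2 : ∑ j ∈ Finset.range (n+1),
        (coeff n ((degExp lam 1 - 1) ^ j) / j.factorial) * dff 1 x j
        = dff lam x n / n.factorial := by
      have h3 : coeff n (degExp lam x) = dff lam x n / n.factorial := by
        simp [degExp]
      have := congrArg (coeff n) (pcomp_onePlus_eps lam hlam x)
      rw [coeff_pcomp, h3] at this
      rw [← this]
      apply Finset.sum_congr rfl
      intro j _
      rw [coeff_onePlus]
      ring
    rw [Finset.sum_congr rfl (fun j _ => sub_mul (S2 n j / n.factorial) _ (dff 1 x j)),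
      Finset.sum_sub_distrib, h1, h2, sub_self]
  have := dff_indep n _ key k hk
  linarith

/-- `C_n^{(r)}(x) = Σ_{k=0}^n Σ_{l=0}^k E_{l,λ}^{(r)}(x) S_{J,λ}^{(1)}(k,l) S_{2,λ}(n,k)`. -/
theorem stmt_9 (lam : ℝ) (hlam : lam ≠ 0) (r : ℕ) (hr : 1 ≤ r)
    (S2 : ℕ → ℕ → ℝ)
    (hS2 : ∀ (x : ℝ) (n : ℕ), dff lam x n = ∑ l ∈ Finset.range (n + 1), S2 n l * dff 1 x l)
    (E C : ℝ → ℕ → ℝ)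
    (hE : ∀ x : ℝ, (degExp lam 1 + degExp lam (-1)) ^ r *
      PowerSeries.mk (fun n => E x n / n.factorial) = 2 ^ r * degExp lam x)
    (hC : ∀ x : ℝ, (onePlus 2 + 1) ^ r *
      PowerSeries.mk (fun n => C x n / n.factorial) = 2 ^ r * onePlus (x + r))
    (SJ1 : ℕ → ℕ → ℝ)
    (hSJ1 : ∀ k : ℕ, PowerSeries.mk (fun n => SJ1 n k / n.factorial) =
      ((k.factorial : ℝ))⁻¹ • pcomp (degLog lam) (degLog lam) ^ k)
    (n : ℕ) (x : ℝ) :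
    C x n = ∑ k ∈ Finset.range (n + 1), ∑ l ∈ Finset.range (k + 1),
      E x l * SJ1 k l * S2 n k := by
  set u := degLog lam with hu
  set eps := degExp lam 1 - 1 with heps
  set D := pcomp u u with hD
  set F := PowerSeries.mk (fun l => E x l / l.factorial) with hF
  have huc : constantCoeff u = 0 := constantCoeff_degLog lam
  have hepsc : constantCoeff eps = 0 := constantCoeff_eps lam
  have hDc : constantCoeff D = 0 := by rw [hD, constantCoeff_pcomp, huc]
  -- Step 1: pcomp F u = pcomp (pcomp F D) eps
  have step1 : pcomp (pcomp F D) eps = pcomp F u := by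
    rw [pcomp_assoc hDc hepsc, hD, pcomp_assoc huc hepsc, pcomp_degLog_eps lam hlam,
      pcomp_right_X]
  -- Step 2: coefficient of pcomp (pcomp F D) eps
  have step2 : coeff n (pcomp (pcomp F D) eps)
      = (∑ k ∈ Finset.range (n + 1), ∑ l ∈ Finset.range (k + 1),
          E x l * SJ1 k l * S2 n k) / n.factorial := by
    rw [coeff_pcomp, Finset.sum_div]
    apply Finset.sum_congr rfl
    intro k hk
    rw [Finset.mem_range, Nat.lt_succ_iff] at hk
    have hcoeffD : coeff k (pcomp F D)
        = ∑ l ∈ Finset.range (k + 1), E x l * SJ1 k l / k.factorial := by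
      rw [coeff_pcomp]
      apply Finset.sum_congr rfl
      intro l _
      have h := congrArg (coeff k) (hSJ1 l)
      simp only [PowerSeries.coeff_mk, LinearMap.map_smul_of_tower, smul_eq_mul] at h
      -- h : SJ1 k l / k! = (l!)⁻¹ * coeff k (D^l)
      have hl : coeff k (D ^ l) = (l.factorial : ℝ) * (SJ1 k l / k.factorial) := by
        rw [h]
        field_simp
      rw [hF, PowerSeries.coeff_mk, hl]
      field_simp
    have hepsk : coeff n (eps ^ k)
        = (k.factorial : ℝ) * (S2 n k / n.factorial) := by
      have hs := S2_formula lam hlam S2 hS2 n k hk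
      have hkf : (k.factorial : ℝ) ≠ 0 := Nat.cast_ne_zero.mpr (Nat.factorial_ne_zero k)
      have hnf : (n.factorial : ℝ) ≠ 0 := Nat.cast_ne_zero.mpr (Nat.factorial_ne_zero n)
      rw [heps]
      field_simp at hs ⊢
      linear_combination -hs
    rw [hcoeffD, hepsk, Finset.sum_mul, Finset.sum_div]
    apply Finset.sum_congr rfl
    intro l _
    have hkf : (k.factorial : ℝ) ≠ 0 := Nat.cast_ne_zero.mpr (Nat.factorial_ne_zero k)
    have hnf : (n.factorial : ℝ) ≠ 0 := Nat.cast_ne_zero.mpr (Nat.factorial_ne_zero n)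
    field_simp
  -- Step 3: transform hE by composing with u
  have step3 : (onePlus 1 + onePlus (-1)) ^ r * pcomp F u = 2 ^ r * onePlus x := by
    have h := congrArg (fun f => pcomp f u) (hE x)
    rw [pcomp_mul huc, pcomp_mul huc, pcomp_pow huc, pcomp_pow huc, pcomp_add,
      pcomp_degExp_degLog lam hlam 1, pcomp_degExp_degLog lam hlam (-1),
      pcomp_degExp_degLog lam hlam x] at h
    have h2 : pcomp (2 : PowerSeries ℝ) u = 2 := by
      have : (2 : PowerSeries ℝ) = 1 + 1 := by norm_num
      rw [this, pcomp_add, pcomp_one]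
    rw [h2] at h
    exact h
  -- Step 4: relate the Euler factor to the Changhee factor
  have fact4 : onePlus 1 + onePlus (-1) = onePlus (-1) * (onePlus 2 + 1) := by
    rw [mul_add, mul_one, onePlus_mul]
    norm_num
  have step5 : (onePlus 2 + 1) ^ r * pcomp F u = 2 ^ r * onePlus (x + r) := by
    have h := step3
    rw [fact4, mul_pow] at h
    have hcancel : onePlus (r : ℝ) * onePlus (-1) ^ r = 1 := by
      rw [onePlus_pow, onePlus_mul]
      norm_num
      exact onePlus_zero
    calc (onePlus 2 + 1) ^ r * pcomp F u
        = onePlus (r : ℝ) * onePlus (-1) ^ r * ((onePlus 2 + 1) ^ r * pcomp F u) := by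
          rw [hcancel, one_mul]
      _ = onePlus (r : ℝ) * (onePlus (-1) ^ r * (onePlus 2 + 1) ^ r * pcomp F u) := by ring
      _ = onePlus (r : ℝ) * (2 ^ r * onePlus x) := by rw [h]
      _ = 2 ^ r * (onePlus x * onePlus (r : ℝ)) := by ring
      _ = 2 ^ r * onePlus (x + r) := by rw [onePlus_mul]
  -- Step 5: cancel against hC
  have hM : ((onePlus 2 + 1 : PowerSeries ℝ)) ^ r ≠ 0 := by
    apply pow_ne_zero
    intro hzero
    have := congrArg (constantCoeff) hzero
    rw [map_add, map_one, constantCoeff_onePlus, map_zero] at this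
    norm_num at this
  have main : PowerSeries.mk (fun n => C x n / n.factorial) = pcomp F u := by
    apply mul_left_cancel₀ hM
    rw [hC x, step5]
  have := congrArg (coeff n) main
  rw [PowerSeries.coeff_mk, ← step1, step2] at this
  have hnf : (n.factorial : ℝ) ≠ 0 := Nat.cast_ne_zero.mpr (Nat.factorial_ne_zero n)
  field_simp at this
  exact this
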